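/- Let 𝕂 be ℝ or ℂ and suppose that the r-tuple 𝒜 = (A_1,…,A_r) of d×d matrices over 𝕂 is relatively product bounded and satisfies both the unbounded agreements property and the rank one property. Then any two Barabanov norms for 𝒜 are proportional: if ‖·‖_1 and ‖·‖_2 are Barabanov norms for 𝒜 then there is c > 0 with ‖v‖_2 = c‖v‖_1 for all v ∈ 𝕂^d. -/

import Mathlib

open Filter Topology

noncomputable section

namespace JSRPaper

variable {𝕂 : Type*} [RCLike 𝕂] {ι : Type*} [Fintype ι] [DecidableEq ι] {r : ℕ}

/-- The Euclidean operator norm of a matrix, i.e. the operator norm induced by the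
Euclidean norm on `𝕂^ι`. -/
noncomputable def eNorm (A : Matrix ι ι 𝕂) : ℝ :=
  ‖Matrix.toEuclideanCLM (𝕜 := 𝕂) A‖

/-- The product `A_{i n} ⋯ A_{i 1}` associated to the word `i : Fin n → Fin r`. -/
noncomputable def wordProd (A : Fin r → Matrix ι ι 𝕂) {n : ℕ} (i : Fin n → Fin r) :
    Matrix ι ι 𝕂 :=
  ((List.ofFn fun k => A (i k)).reverse).prod

/-- The joint spectral radius of the tuple `A`, expressed via the standard
characterisation `ϱ(𝒜) = inf_n max_{|i| = n} ‖A_{i_n} ⋯ A_{i_1}‖^{1/n}`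
(the infimum equals the limit). -/
noncomputable def jsr (A : Fin r → Matrix ι ι 𝕂) : ℝ :=
  ⨅ n : ℕ+, (⨆ i : Fin (n : ℕ) → Fin r, eNorm (wordProd A i)) ^ ((n : ℝ)⁻¹)

/-- The spectral radius of a matrix, via Gelfand's formula
`ρ(A) = inf_k ‖A^k‖^{1/k}` (the infimum equals the limit). -/
noncomputable def specRad (A : Matrix ι ι 𝕂) : ℝ :=
  ⨅ k : ℕ+, eNorm (A ^ (k : ℕ)) ^ (((k : ℕ) : ℝ)⁻¹)

/-- `N` is a norm on `𝕂^ι`. -/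
def IsNorm (N : EuclideanSpace 𝕂 ι → ℝ) : Prop :=
  (∀ v, N v = 0 ↔ v = 0) ∧ (∀ (c : 𝕂) (v), N (c • v) = ‖c‖ * N v) ∧
    ∀ u v, N (u + v) ≤ N u + N v

/-- The operator norm of the matrix `A` induced by the norm `N` on `𝕂^ι`. -/
noncomputable def opNormWrt (N : EuclideanSpace 𝕂 ι → ℝ) (A : Matrix ι ι 𝕂) : ℝ :=
  sSup {x : ℝ | ∃ v, N v ≤ 1 ∧ x = N (Matrix.toEuclideanCLM (𝕜 := 𝕂) A v)}

/-- `N` is a Barabanov norm for the tuple `A` : it is a norm and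
`ϱ(𝒜) ‖v‖ = max_i ‖A_i v‖` for every `v`. -/
def IsBarabanov (A : Fin r → Matrix ι ι 𝕂) (N : EuclideanSpace 𝕂 ι → ℝ) : Prop :=
  IsNorm N ∧ ∀ v, jsr A * N v = ⨆ i : Fin r, N (Matrix.toEuclideanCLM (𝕜 := 𝕂) (A i) v)

/-- The tuple `A` is irreducible: no subspace of `𝕂^ι` other than `⊥` and `⊤`
is invariant under every `A i`. -/
def IsIrreducible (A : Fin r → Matrix ι ι 𝕂) : Prop :=
  ∀ V : Submodule 𝕂 (EuclideanSpace 𝕂 ι),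
    (∀ i, ∀ v ∈ V, Matrix.toEuclideanCLM (𝕜 := 𝕂) (A i) v ∈ V) → V = ⊥ ∨ V = ⊤

/-- Two words of length `n` are rotation equivalent if one is a cyclic shift of the other. -/
def RotEquiv {n : ℕ} (z w : Fin n → Fin r) : Prop :=
  ∃ k : ℕ, ∀ j : Fin n, z j = w ⟨(j.val + k) % n, Nat.mod_lt _ j.pos⟩

/-- The tuple `A` satisfies the strong finiteness hypothesis with characteristic word `ω`:
for every Barabanov norm `N` for `A`, every word of the same length as `ω` which is not
rotation equivalent to `ω` has `N`-operator-norm product strictly less than `ϱ(𝒜)^n`. -/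
def StrongFinHyp (A : Fin r → Matrix ι ι 𝕂) {n : ℕ} (ω : Fin n → Fin r) : Prop :=
  ∀ N : EuclideanSpace 𝕂 ι → ℝ, IsBarabanov A N →
    ∀ z : Fin n → Fin r, ¬ RotEquiv z ω → opNormWrt N (wordProd A z) < jsr A ^ n

/-- The tuple `A` is relatively product bounded : `ϱ(𝒜) > 0` and the set of normalised
products `ϱ(𝒜)^{-n} A_{i_n} ⋯ A_{i_1}` is bounded. -/
def RelProdBounded (A : Fin r → Matrix ι ι 𝕂) : Prop :=
  0 < jsr A ∧ ∃ C : ℝ, ∀ (n : ℕ) (i : Fin n → Fin r), eNorm (wordProd A i) ≤ C * jsr A ^ n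

/-- The limit semigroup `𝒮(𝒜) = ⋂_{m ≥ 1} closure (⋃_{n ≥ m} ϱ(𝒜)^{-n} 𝒜_n)`,
written out via the metric characterisation of the closure. -/
def limitSemigroup (A : Fin r → Matrix ι ι 𝕂) : Set (Matrix ι ι 𝕂) :=
  {B | ∀ m : ℕ, ∀ ε > (0 : ℝ), ∃ n : ℕ, m ≤ n ∧ ∃ i : Fin n → Fin r,
    eNorm ((jsr A ^ n)⁻¹ • wordProd A i - B) < ε}

/-- The tuple `A` has the rank one property: it is relatively product bounded and every
nonzero element of the limit semigroup has rank one. -/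
def RankOneProp (A : Fin r → Matrix ι ι 𝕂) : Prop :=
  RelProdBounded A ∧ ∀ B ∈ limitSemigroup A, B ≠ 0 → B.rank = 1

/-- The product `A_{i n} ⋯ A_{i 1}` along the first `n` terms of the sequence `i`
(indexed from `1`). -/
noncomputable def seqProd (A : Fin r → Matrix ι ι 𝕂) (i : ℕ → Fin r) (n : ℕ) :
    Matrix ι ι 𝕂 :=
  wordProd A fun k : Fin n => i (k.val + 1)

/-- The unbounded agreements property: any two sequences whose normalised partial
products do not tend to zero (i.e. `limsup ‖A_{i(n)} ⋯ A_{i(1)}‖ / ϱ(𝒜)^n > 0`) contain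
arbitrarily long identical blocks. -/
def UnboundedAgreements (A : Fin r → Matrix ι ι 𝕂) : Prop :=
  ∀ N : ℕ, ∀ i₁ i₂ : ℕ → Fin r,
    (∃ c > (0 : ℝ), ∀ m : ℕ, ∃ n, m ≤ n ∧ c ≤ eNorm (seqProd A i₁ n) / jsr A ^ n) →
    (∃ c > (0 : ℝ), ∀ m : ℕ, ∃ n, m ≤ n ∧ c ≤ eNorm (seqProd A i₂ n) / jsr A ^ n) →
    ∃ n₁ n₂ : ℕ, ∀ k : ℕ, 1 ≤ k → k ≤ N → i₁ (n₁ + k) = i₂ (n₂ + k)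

/-- The finiteness property: some periodic product realises the joint spectral radius,
`ρ(A_{i_n} ⋯ A_{i_1})^{1/n} = ϱ(𝒜)`. -/
def FinitenessProp (A : Fin r → Matrix ι ι 𝕂) : Prop :=
  ∃ (n : ℕ) (_ : 0 < n) (i : Fin n → Fin r),
    specRad (wordProd A i) ^ ((n : ℝ)⁻¹) = jsr A

/-- The second exterior power (second compound matrix) of a `d × d` matrix, written
in the standard basis `(e_i ∧ e_j)_{i < j}` of `⋀² 𝕂^d`. -/
noncomputable def ext2 {d : ℕ} (A : Matrix (Fin d) (Fin d) 𝕂) :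
    Matrix {p : Fin d × Fin d // p.1 < p.2} {p : Fin d × Fin d // p.1 < p.2} 𝕂 :=
  fun p q => A p.1.1 q.1.1 * A p.1.2 q.1.2 - A p.1.1 q.1.2 * A p.1.2 q.1.1

/-- The word `ω` of length `n` is a power of a shorter word. -/
def IsPowerOfShorter {n : ℕ} (ω : Fin n → Fin r) : Prop :=
  ∃ (q : ℕ) (h0 : 0 < q) (h1 : q < n), q ∣ n ∧
    ∀ j : Fin n, ω j = ω ⟨j.val % q, lt_trans (Nat.mod_lt _ h0) h1⟩

/-- `Θ_ω(𝒜)`: the supremum of `‖A_{ω_n} ⋯ A_{ω_1}‖^{1/n}` over all Barabanov norms. -/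
noncomputable def Theta {n : ℕ} (ω : Fin n → Fin r) (A : Fin r → Matrix ι ι 𝕂) : ℝ :=
  sSup {x : ℝ | ∃ N, IsBarabanov A N ∧ x = opNormWrt N (wordProd A ω) ^ ((n : ℝ)⁻¹)}

end JSRPaper

/-!
Let `u₁` maximise and `u₂` minimise `N₂ / N₁`. Following from `u₁` (resp. `u₂`) a matrix that
attains the maximum in the Barabanov equation of `N₂` (resp. `N₁`) gives a trajectory along which
both norms grow exactly like `ϱ(𝒜)ⁿ`, so its normalised products do not tend to zero. By unbounded
agreements the two trajectories share blocks of every length; normalised, these blocks accumulate at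
some nonzero `B` in the limit semigroup, and `B` maps limit points of the two normalised
trajectories to vectors with the `N₁`- and `N₂`-norms of `u₁` and `u₂`. As `B` has rank one, these
vectors are proportional, so `N₂ / N₁` takes the same value at `u₁` and at `u₂`: its maximum equals
its minimum.
-/

namespace JSRPaper

open Matrix

section IsNorm

variable {𝕂 : Type*} [RCLike 𝕂] {ι : Type*} {N N' : EuclideanSpace 𝕂 ι → ℝ}

def IsNorm.toSeminorm (hN : IsNorm N) : Seminorm 𝕂 (EuclideanSpace 𝕂 ι) :=
  Seminorm.of N hN.2.2 hN.2.1

theorem IsNorm.map_zero (hN : IsNorm N) : N 0 = 0 :=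
  _root_.map_zero hN.toSeminorm

theorem IsNorm.nonneg (hN : IsNorm N) (v : EuclideanSpace 𝕂 ι) : 0 ≤ N v :=
  apply_nonneg hN.toSeminorm v

theorem IsNorm.pos (hN : IsNorm N) {v : EuclideanSpace 𝕂 ι} (hv : v ≠ 0) : 0 < N v :=
  (hN.nonneg v).lt_of_ne' fun h => hv ((hN.1 v).1 h)

theorem IsNorm.map_smul_real (hN : IsNorm N) (x : ℝ) (v : EuclideanSpace 𝕂 ι) :
    N (x • v) = |x| * N v := by
  rw [RCLike.real_smul_eq_coe_smul (K := 𝕂), hN.2.1, RCLike.norm_ofReal]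

theorem IsNorm.map_inv_pow_smul (hN : IsNorm N) {ρ : ℝ} (hρ : 0 < ρ) {n : ℕ}
    {x u : EuclideanSpace 𝕂 ι} (h : N x = ρ ^ n * N u) : N ((ρ ^ n)⁻¹ • x) = N u := by
  rw [hN.map_smul_real, h, abs_inv, abs_of_pos (pow_pos hρ n),
    inv_mul_cancel_left₀ (pow_pos hρ n).ne']

theorem IsNorm.exists_le_mul_norm [Fintype ι] (hN : IsNorm N) : ∃ b, ∀ v, N v ≤ b * ‖v‖ := by
  classical
  let e := EuclideanSpace.basisFun ι 𝕂
  refine ⟨∑ i, N (e i), fun v => ?_⟩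
  calc N v = N (∑ i, e.repr v i • e i) := by rw [e.sum_repr]
    _ ≤ ∑ i, N (e.repr v i • e i) := Finset.le_sum_of_subadditive N hN.map_zero.le hN.2.2 _ _
    _ ≤ ∑ i, ‖v‖ * N (e i) := by
        gcongr with i
        rw [hN.2.1, EuclideanSpace.basisFun_repr]
        exact mul_le_mul_of_nonneg_right (PiLp.norm_apply_le v i) (hN.nonneg _)
    _ = (∑ i, N (e i)) * ‖v‖ := by rw [← Finset.mul_sum, mul_comm]

theorem IsNorm.continuous [Fintype ι] (hN : IsNorm N) : Continuous N := by
  obtain ⟨b, hb⟩ := hN.exists_le_mul_norm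
  refine (LipschitzWith.of_le_add_mul' b fun u v => ?_).continuous
  calc N u = N (v + (u - v)) := by rw [add_sub_cancel]
    _ ≤ N v + b * dist u v := by rw [dist_eq_norm]; linarith [hN.2.2 v (u - v), hb (u - v)]

theorem IsNorm.exists_pos_mul_norm_le [Fintype ι] (hN : IsNorm N) :
    ∃ a > 0, ∀ v, a * ‖v‖ ≤ N v := by
  obtain ⟨a, ha, hsphere⟩ := (isCompact_sphere (0 : EuclideanSpace 𝕂 ι) 1).exists_forall_le'
    hN.continuous.continuousOn fun v hv => hN.pos (ne_zero_of_mem_unit_sphere ⟨v, hv⟩)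
  refine ⟨a, ha, fun v => ?_⟩
  rcases eq_or_ne v 0 with rfl | hv
  · simp [hN.map_zero]
  have hvpos := norm_pos_iff.2 hv
  have := hsphere (‖v‖⁻¹ • v) (by simp [norm_smul, hvpos.ne'])
  rw [hN.map_smul_real, abs_inv, abs_norm] at this
  rwa [le_inv_mul_iff₀ hvpos, mul_comm] at this

theorem IsNorm.isBounded_setOf_le [Fintype ι] (hN : IsNorm N) (M : ℝ) :
    Bornology.IsBounded {v | N v ≤ M} := by
  obtain ⟨a, ha, hle⟩ := hN.exists_pos_mul_norm_le
  refine (Metric.isBounded_closedBall (x := 0) (r := M / a)).subset fun v hv => ?_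
  rw [mem_closedBall_zero_iff, le_div_iff₀ ha, mul_comm]
  exact (hle v).trans hv

theorem IsNorm.exists_ratio_le [Fintype ι] [Nonempty ι] (hN : IsNorm N) (hN' : IsNorm N') :
    ∃ u ≠ 0, ∀ v, N' v * N u ≤ N' u * N v := by
  have hne : ∀ v ∈ Metric.sphere (0 : EuclideanSpace 𝕂 ι) 1, v ≠ 0 :=
    fun v hv => ne_zero_of_mem_unit_sphere ⟨v, hv⟩
  obtain ⟨u, hu, hmax⟩ := (isCompact_sphere (0 : EuclideanSpace 𝕂 ι) 1).exists_isMaxOn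
    (NormedSpace.sphere_nonempty.2 zero_le_one)
    (hN'.continuous.continuousOn.div hN.continuous.continuousOn fun v hv => (hN.pos (hne v hv)).ne')
  refine ⟨u, hne u hu, fun v => ?_⟩
  rcases eq_or_ne v 0 with rfl | hv
  · simp [hN.map_zero, hN'.map_zero]
  have hvpos := norm_pos_iff.2 hv
  have : N' (‖v‖⁻¹ • v) / N (‖v‖⁻¹ • v) ≤ N' u / N u :=
    hmax (a := ‖v‖⁻¹ • v) (by simp [norm_smul, hvpos.ne'])
  rw [hN.map_smul_real, hN'.map_smul_real,
    mul_div_mul_left _ _ (abs_pos.2 (inv_ne_zero hvpos.ne')).ne'] at this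
  rwa [div_le_div_iff₀ (hN.pos hv) (hN.pos (hne u hu))] at this

theorem eq_div_mul_of_max_ratio_eq_min_ratio {α : Type*} {N₁ N₂ : α → ℝ} {u₁ u₂ : α}
    (hu₁ : 0 < N₁ u₁) (hu₂ : 0 < N₁ u₂) (hmax : ∀ v, N₂ v * N₁ u₁ ≤ N₂ u₁ * N₁ v)
    (hmin : ∀ v, N₁ v * N₂ u₂ ≤ N₁ u₂ * N₂ v) (h : N₂ u₂ * N₁ u₁ = N₂ u₁ * N₁ u₂) (v : α) :
    N₂ v = N₂ u₁ / N₁ u₁ * N₁ v := by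
  rw [div_mul_eq_mul_div, eq_div_iff hu₁.ne']
  refine le_antisymm (by linarith [hmax v]) (le_of_mul_le_mul_left ?_ hu₂)
  calc N₁ u₂ * (N₂ u₁ * N₁ v) = N₁ v * N₂ u₂ * N₁ u₁ := by rw [mul_assoc _ (N₂ u₂), h]; ring
    _ ≤ N₁ u₂ * N₂ v * N₁ u₁ := mul_le_mul_of_nonneg_right (hmin v) hu₁.le
    _ = N₁ u₂ * (N₂ v * N₁ u₁) := by ring

end IsNorm

section Words

variable {𝕂 : Type*} [RCLike 𝕂] {ι : Type*} [Fintype ι] [DecidableEq ι] {r : ℕ}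
  (A : Fin r → Matrix ι ι 𝕂)

/-- The block `i (n + 1), …, i (n + L)` of the sequence `i`. -/
def seqBlock (i : ℕ → Fin r) (n L : ℕ) : Fin L → Fin r :=
  fun k => i (n + (k + 1))

theorem wordProd_succ {n : ℕ} (w : Fin (n + 1) → Fin r) :
    wordProd A w = A (w (Fin.last n)) * wordProd A (fun k : Fin n => w k.castSucc) := by
  rw [wordProd, List.ofFn_succ', List.concat_eq_append, List.reverse_append]
  simp [wordProd]

theorem seqProd_zero (i : ℕ → Fin r) : seqProd A i 0 = 1 := by
  simp [seqProd, wordProd]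

theorem seqProd_succ (i : ℕ → Fin r) (n : ℕ) :
    seqProd A i (n + 1) = A (i (n + 1)) * seqProd A i n :=
  wordProd_succ A _

theorem seqProd_add (i : ℕ → Fin r) (n L : ℕ) :
    seqProd A i (n + L) = wordProd A (seqBlock i n L) * seqProd A i n := by
  induction L with
  | zero => simp [seqBlock, wordProd]
  | succ L ih =>
    rw [← add_assoc, seqProd_succ, ih, wordProd_succ A (seqBlock i n (L + 1)), mul_assoc]
    rfl

theorem toEuclideanCLM_real_smul (x : ℝ) (M : Matrix ι ι 𝕂) :
    toEuclideanCLM (𝕜 := 𝕂) (x • M) = x • toEuclideanCLM (𝕜 := 𝕂) M := by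
  ext1 v
  rw [_root_.smul_apply, RCLike.real_smul_eq_coe_smul (K := 𝕂) x M, map_smul, _root_.smul_apply,
    RCLike.real_smul_eq_coe_smul (K := 𝕂)]

theorem toEuclideanCLM_smul_wordProd_seqBlock_apply (i : ℕ → Fin r) (ρ : ℝ) (n L : ℕ)
    (u : EuclideanSpace 𝕂 ι) :
    toEuclideanCLM (𝕜 := 𝕂) ((ρ ^ L)⁻¹ • wordProd A (seqBlock i n L))
        ((ρ ^ n)⁻¹ • toEuclideanCLM (𝕜 := 𝕂) (seqProd A i n) u) =
      (ρ ^ (n + L))⁻¹ • toEuclideanCLM (𝕜 := 𝕂) (seqProd A i (n + L)) u := by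
  rw [seqProd_add, map_mul, toEuclideanCLM_real_smul, _root_.smul_apply,
    ContinuousLinearMap.map_smul_of_tower, smul_smul, pow_add, mul_inv, mul_comm]
  rfl

end Words

section Barabanov

variable {𝕂 : Type*} [RCLike 𝕂] {ι : Type*} [Fintype ι] [DecidableEq ι] {r : ℕ}
  {A : Fin r → Matrix ι ι 𝕂} {N N' : EuclideanSpace 𝕂 ι → ℝ}

theorem jsr_nonneg (A : Fin r → Matrix ι ι 𝕂) : 0 ≤ jsr A :=
  Real.iInf_nonneg fun _ => Real.rpow_nonneg (Real.iSup_nonneg fun _ => norm_nonneg _) _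

theorem IsBarabanov.apply_le (hN : IsBarabanov A N) (v : EuclideanSpace 𝕂 ι) (j : Fin r) :
    N (toEuclideanCLM (𝕜 := 𝕂) (A j) v) ≤ jsr A * N v := by
  rw [hN.2 v]
  exact le_ciSup (f := fun j => N (toEuclideanCLM (𝕜 := 𝕂) (A j) v)) (Finite.bddAbove_range _) j

theorem IsBarabanov.exists_apply_eq [Nonempty (Fin r)] (hN : IsBarabanov A N)
    (v : EuclideanSpace 𝕂 ι) : ∃ j, N (toEuclideanCLM (𝕜 := 𝕂) (A j) v) = jsr A * N v := by
  rw [hN.2 v]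
  exact exists_eq_ciSup_of_finite (f := fun j => N (toEuclideanCLM (𝕜 := 𝕂) (A j) v))

theorem IsBarabanov.nonempty_of_jsr_pos (hN : IsBarabanov A N) (hρ : 0 < jsr A)
    {v : EuclideanSpace 𝕂 ι} (hv : v ≠ 0) : Nonempty (Fin r) := by
  by_contra h
  rw [not_nonempty_iff] at h
  have hv' := hN.2 v
  rw [Real.iSup_of_isEmpty] at hv'
  exact (mul_pos hρ (hN.1.pos hv)).ne' hv'

theorem IsBarabanov.seqProd_apply_le (hN : IsBarabanov A N) (i : ℕ → Fin r)
    (v : EuclideanSpace 𝕂 ι) (n : ℕ) :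
    N (toEuclideanCLM (𝕜 := 𝕂) (seqProd A i n) v) ≤ jsr A ^ n * N v := by
  induction n with
  | zero => simp [seqProd_zero]
  | succ n ih =>
    rw [seqProd_succ, map_mul, mul_apply_eq_comp, pow_succ', mul_assoc]
    exact (hN.apply_le _ _).trans (mul_le_mul_of_nonneg_left ih (jsr_nonneg A))

theorem IsBarabanov.exists_seq_seqProd_apply_eq [Nonempty (Fin r)] (hN : IsBarabanov A N)
    (u : EuclideanSpace 𝕂 ι) :
    ∃ i : ℕ → Fin r, ∀ n, N (toEuclideanCLM (𝕜 := 𝕂) (seqProd A i n) u) = jsr A ^ n * N u := by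
  choose j hj using hN.exists_apply_eq
  let x : ℕ → EuclideanSpace 𝕂 ι := fun n =>
    Nat.rec u (fun _ v => toEuclideanCLM (𝕜 := 𝕂) (A (j v)) v) n
  have hx : ∀ n, toEuclideanCLM (𝕜 := 𝕂) (seqProd A (fun n => j (x (n - 1))) n) u = x n := by
    intro n
    induction n with
    | zero => simp [seqProd_zero, x]
    | succ n ih => rw [seqProd_succ, map_mul, mul_apply_eq_comp, ih]; rfl
  have hxN : ∀ n, N (x n) = jsr A ^ n * N u := by
    intro n
    induction n with
    | zero => simp [x]
    | succ n ih =>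
      show N (toEuclideanCLM (𝕜 := 𝕂) (A (j (x n))) (x n)) = _
      rw [hj, ih, pow_succ]
      ring
  exact ⟨fun n => j (x (n - 1)), fun n => (hx n).symm ▸ hxN n⟩

/-- Along a trajectory on which `N'` grows maximally the ratio `N' / N` cannot drop below its
maximum, attained at `u`, so `N` grows maximally too. -/
theorem IsBarabanov.exists_seq_of_ratio_le [Nonempty (Fin r)] (hN : IsBarabanov A N)
    (hN' : IsBarabanov A N') {u : EuclideanSpace 𝕂 ι} (hu : u ≠ 0)
    (hmax : ∀ v, N' v * N u ≤ N' u * N v) :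
    ∃ i : ℕ → Fin r, ∀ n,
      N (toEuclideanCLM (𝕜 := 𝕂) (seqProd A i n) u) = jsr A ^ n * N u ∧
      N' (toEuclideanCLM (𝕜 := 𝕂) (seqProd A i n) u) = jsr A ^ n * N' u := by
  obtain ⟨i, hi⟩ := hN'.exists_seq_seqProd_apply_eq u
  refine ⟨i, fun n => ⟨le_antisymm (hN.seqProd_apply_le i u n) ?_, hi n⟩⟩
  have h := hmax (toEuclideanCLM (𝕜 := 𝕂) (seqProd A i n) u)
  rw [hi n] at h
  exact le_of_mul_le_mul_left (by linarith) (hN'.1.pos hu)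

end Barabanov

section LimitSemigroup

variable {𝕂 : Type*} [RCLike 𝕂] {ι : Type*} [Fintype ι] [DecidableEq ι] {r : ℕ}
  {A : Fin r → Matrix ι ι 𝕂} {N N₁ N₂ : EuclideanSpace 𝕂 ι → ℝ}

theorem exists_toEuclideanCLM_apply_eq_smul_of_rank_le_one {B : Matrix ι ι 𝕂} (hB : B.rank ≤ 1) :
    ∃ w : EuclideanSpace 𝕂 ι, ∀ v, ∃ c : 𝕂, toEuclideanCLM (𝕜 := 𝕂) B v = c • w := by
  obtain ⟨w, hw⟩ := finrank_le_one_iff.1 hB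
  refine ⟨WithLp.toLp 2 w.1, fun v => ?_⟩
  obtain ⟨c, hc⟩ := hw ⟨B *ᵥ WithLp.ofLp v, WithLp.ofLp v, rfl⟩
  refine ⟨c, WithLp.ofLp_injective 2 ?_⟩
  simpa using (congrArg Subtype.val hc).symm

theorem IsNorm.mul_apply_eq_mul_apply_of_rank_le_one (hN₁ : IsNorm N₁) (hN₂ : IsNorm N₂)
    {B : Matrix ι ι 𝕂} (hB : B.rank ≤ 1) (v₁ v₂ : EuclideanSpace 𝕂 ι) :
    N₂ (toEuclideanCLM (𝕜 := 𝕂) B v₂) * N₁ (toEuclideanCLM (𝕜 := 𝕂) B v₁) =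
      N₂ (toEuclideanCLM (𝕜 := 𝕂) B v₁) * N₁ (toEuclideanCLM (𝕜 := 𝕂) B v₂) := by
  obtain ⟨w, hw⟩ := exists_toEuclideanCLM_apply_eq_smul_of_rank_le_one hB
  obtain ⟨c₁, hc₁⟩ := hw v₁
  obtain ⟨c₂, hc₂⟩ := hw v₂
  rw [hc₁, hc₂, hN₁.2.1, hN₁.2.1, hN₂.2.1, hN₂.2.1]
  ring

theorem mem_limitSemigroup_of_tendsto {B : Matrix ι ι 𝕂} {ℓ : ℕ → ℕ} (hℓ : Tendsto ℓ atTop atTop)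
    (w : ∀ k, Fin (ℓ k) → Fin r)
    (h : Tendsto (fun k => toEuclideanCLM (𝕜 := 𝕂) ((jsr A ^ ℓ k)⁻¹ • wordProd A (w k))) atTop
      (𝓝 (toEuclideanCLM (𝕜 := 𝕂) B))) :
    B ∈ limitSemigroup A := by
  intro m ε hε
  obtain ⟨k, hkm, hkε⟩ :=
    ((tendsto_atTop.1 hℓ m).and (Metric.tendsto_nhds.1 h ε hε)).exists
  refine ⟨ℓ k, hkm, w k, ?_⟩
  rwa [eNorm, map_sub, ← dist_eq_norm]

theorem RelProdBounded.exists_norm_smul_wordProd_le (hb : RelProdBounded A) :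
    ∃ C, ∀ (L : ℕ) (w : Fin L → Fin r),
      ‖toEuclideanCLM (𝕜 := 𝕂) ((jsr A ^ L)⁻¹ • wordProd A w)‖ ≤ C := by
  obtain ⟨hρ, C, hC⟩ := hb
  refine ⟨C, fun L w => ?_⟩
  have hρL := pow_pos hρ L
  rw [toEuclideanCLM_real_smul, norm_smul, Real.norm_of_nonneg (inv_nonneg.2 hρL.le),
    inv_mul_le_iff₀ hρL, mul_comm]
  exact hC L w

theorem UnboundedAgreements.exists_seqBlock_eq (hu : UnboundedAgreements A) {i₁ i₂ : ℕ → Fin r}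
    (h₁ : ∃ c > (0 : ℝ), ∀ m : ℕ, ∃ n, m ≤ n ∧ c ≤ eNorm (seqProd A i₁ n) / jsr A ^ n)
    (h₂ : ∃ c > (0 : ℝ), ∀ m : ℕ, ∃ n, m ≤ n ∧ c ≤ eNorm (seqProd A i₂ n) / jsr A ^ n) (L : ℕ) :
    ∃ n₁ n₂, seqBlock i₁ n₁ L = seqBlock i₂ n₂ L := by
  obtain ⟨n₁, n₂, h⟩ := hu L i₁ i₂ h₁ h₂
  exact ⟨n₁, n₂, funext fun k => h (k + 1) (Nat.le_add_left 1 k) k.isLt⟩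

theorem IsNorm.exists_pos_le_eNorm_seqProd_div (hN : IsNorm N) (hρ : 0 < jsr A) {i : ℕ → Fin r}
    {u : EuclideanSpace 𝕂 ι} (hu : u ≠ 0)
    (h : ∀ n, N (toEuclideanCLM (𝕜 := 𝕂) (seqProd A i n) u) = jsr A ^ n * N u) :
    ∃ c > (0 : ℝ), ∀ m : ℕ, ∃ n, m ≤ n ∧ c ≤ eNorm (seqProd A i n) / jsr A ^ n := by
  obtain ⟨b, hb⟩ := hN.exists_le_mul_norm
  have hNu := hN.pos hu
  have hb₀ : 0 < b := pos_of_mul_pos_left (hNu.trans_le (hb u)) (norm_nonneg u)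
  refine ⟨N u / (b * ‖u‖), by positivity, fun m => ⟨m, le_rfl, ?_⟩⟩
  rw [div_le_div_iff₀ (by positivity) (pow_pos hρ m), mul_comm (N u), ← h m]
  calc N (toEuclideanCLM (𝕜 := 𝕂) (seqProd A i m) u)
      ≤ b * ‖toEuclideanCLM (𝕜 := 𝕂) (seqProd A i m) u‖ := hb _
    _ ≤ b * (eNorm (seqProd A i m) * ‖u‖) := by gcongr; exact ContinuousLinearMap.le_opNorm _ u
    _ = _ := by ring

theorem apply_eq_of_tendsto {E : Type*} [NormedAddCommGroup E] [NormedSpace 𝕂 E] {f : E → ℝ}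
    (hf : Continuous f) {T : ℕ → E →L[𝕂] E} {T₀ : E →L[𝕂] E} {x : ℕ → E} {x₀ : E} {e : ℝ}
    (hT : Tendsto T atTop (𝓝 T₀)) (hx : Tendsto x atTop (𝓝 x₀)) (h : ∀ k, f (T k (x k)) = e) :
    f (T₀ x₀) = e :=
  tendsto_nhds_unique (((hf.comp (continuous_fst.clm_apply continuous_snd)).tendsto _).comp
    (hT.prodMk_nhds hx)) (by simp only [Function.comp_def, h, tendsto_const_nhds])

/-- `B` is a limit point of the normalised blocks shared by the two trajectories. -/
theorem exists_mem_limitSemigroup_norm_apply_eq (hb : RelProdBounded A)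
    (hu : UnboundedAgreements A) (hN₁ : IsNorm N₁) (hN₂ : IsNorm N₂)
    {u₁ u₂ : EuclideanSpace 𝕂 ι} (hu₁ : u₁ ≠ 0) (hu₂ : u₂ ≠ 0) {i₁ i₂ : ℕ → Fin r}
    (h₁ : ∀ n, N₁ (toEuclideanCLM (𝕜 := 𝕂) (seqProd A i₁ n) u₁) = jsr A ^ n * N₁ u₁ ∧
      N₂ (toEuclideanCLM (𝕜 := 𝕂) (seqProd A i₁ n) u₁) = jsr A ^ n * N₂ u₁)
    (h₂ : ∀ n, N₁ (toEuclideanCLM (𝕜 := 𝕂) (seqProd A i₂ n) u₂) = jsr A ^ n * N₁ u₂ ∧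
      N₂ (toEuclideanCLM (𝕜 := 𝕂) (seqProd A i₂ n) u₂) = jsr A ^ n * N₂ u₂) :
    ∃ B ∈ limitSemigroup A, ∃ v₁ v₂,
      N₁ (toEuclideanCLM (𝕜 := 𝕂) B v₁) = N₁ u₁ ∧ N₂ (toEuclideanCLM (𝕜 := 𝕂) B v₁) = N₂ u₁ ∧
      N₁ (toEuclideanCLM (𝕜 := 𝕂) B v₂) = N₁ u₂ ∧ N₂ (toEuclideanCLM (𝕜 := 𝕂) B v₂) = N₂ u₂ := by
  have hρ := hb.1
  choose n₁ n₂ hagree using hu.exists_seqBlock_eq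
    (hN₁.exists_pos_le_eNorm_seqProd_div hρ hu₁ fun n => (h₁ n).1)
    (hN₁.exists_pos_le_eNorm_seqProd_div hρ hu₂ fun n => (h₂ n).1)
  obtain ⟨C, hC⟩ := hb.exists_norm_smul_wordProd_le
  set y₁ : ℕ → EuclideanSpace 𝕂 ι := fun n =>
    (jsr A ^ n)⁻¹ • toEuclideanCLM (𝕜 := 𝕂) (seqProd A i₁ n) u₁
  set y₂ : ℕ → EuclideanSpace 𝕂 ι := fun n =>
    (jsr A ^ n)⁻¹ • toEuclideanCLM (𝕜 := 𝕂) (seqProd A i₂ n) u₂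
  have hy₁ n : N₁ (y₁ n) = N₁ u₁ ∧ N₂ (y₁ n) = N₂ u₁ :=
    ⟨hN₁.map_inv_pow_smul hρ (h₁ n).1, hN₂.map_inv_pow_smul hρ (h₁ n).2⟩
  have hy₂ n : N₁ (y₂ n) = N₁ u₂ ∧ N₂ (y₂ n) = N₂ u₂ :=
    ⟨hN₁.map_inv_pow_smul hρ (h₂ n).1, hN₂.map_inv_pow_smul hρ (h₂ n).2⟩
  set T : ℕ → EuclideanSpace 𝕂 ι →L[𝕂] EuclideanSpace 𝕂 ι := fun L =>
    toEuclideanCLM (𝕜 := 𝕂) ((jsr A ^ L)⁻¹ • wordProd A (seqBlock i₁ (n₁ L) L))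
  have hT₁ L : T L (y₁ (n₁ L)) = y₁ (n₁ L + L) :=
    toEuclideanCLM_smul_wordProd_seqBlock_apply A i₁ _ _ _ _
  have hT₂ L : T L (y₂ (n₂ L)) = y₂ (n₂ L + L) := by
    simp only [T, hagree L]
    exact toEuclideanCLM_smul_wordProd_seqBlock_apply A i₂ _ _ _ _
  have : ProperSpace (EuclideanSpace 𝕂 ι →L[𝕂] EuclideanSpace 𝕂 ι) := FiniteDimensional.proper 𝕂 _
  obtain ⟨⟨T₀, v₁, v₂⟩, -, φ, hφ, hlim⟩ := tendsto_subseq_of_bounded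
    ((Metric.isBounded_closedBall (x := 0) (r := C)).prod
      ((hN₁.isBounded_setOf_le (N₁ u₁)).prod (hN₁.isBounded_setOf_le (N₁ u₂))))
    (x := fun L => (T L, y₁ (n₁ L), y₂ (n₂ L)))
    fun L => Set.mk_mem_prod (mem_closedBall_zero_iff.2 (hC _ _))
      (Set.mk_mem_prod (hy₁ _).1.le (hy₂ _).1.le)
  have hT := hlim.fst_nhds
  have hv₁ := hlim.snd_nhds.fst_nhds
  have hv₂ := hlim.snd_nhds.snd_nhds
  refine ⟨(toEuclideanCLM (𝕜 := 𝕂)).symm T₀, mem_limitSemigroup_of_tendsto hφ.tendsto_atTop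
    (fun k => seqBlock i₁ (n₁ (φ k)) (φ k)) (by simpa using hT), v₁, v₂, ?_⟩
  simp only [StarAlgEquiv.apply_symm_apply]
  exact ⟨apply_eq_of_tendsto hN₁.continuous hT hv₁ fun k => by simp [hT₁, hy₁],
    apply_eq_of_tendsto hN₂.continuous hT hv₁ fun k => by simp [hT₁, hy₁],
    apply_eq_of_tendsto hN₁.continuous hT hv₂ fun k => by simp [hT₂, hy₂],
    apply_eq_of_tendsto hN₂.continuous hT hv₂ fun k => by simp [hT₂, hy₂]⟩

end LimitSemigroup

end JSRPaper

open JSRPaper in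
/-- **Theorem 2 (UBN).** If the `r`-tuple `A` is relatively product bounded and has both
the unbounded agreements property and the rank one property, then any two Barabanov norms
for `A` are proportional. -/
theorem stmt_4 {𝕂 : Type*} [RCLike 𝕂] {r d : ℕ}
    (A : Fin r → Matrix (Fin d) (Fin d) 𝕂)
    (hb : RelProdBounded A) (hu : UnboundedAgreements A) (h1 : RankOneProp A)
    (N₁ N₂ : EuclideanSpace 𝕂 (Fin d) → ℝ)
    (hN₁ : IsBarabanov A N₁) (hN₂ : IsBarabanov A N₂) :
    ∃ c > (0 : ℝ), ∀ v, N₂ v = c * N₁ v := by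
  rcases isEmpty_or_nonempty (Fin d) with hd | hd
  · exact ⟨1, one_pos, fun v => by rw [Subsingleton.elim v 0, hN₁.1.map_zero, hN₂.1.map_zero,
      mul_zero]⟩
  obtain ⟨u₁, hu₁, hmax⟩ := hN₁.1.exists_ratio_le hN₂.1
  obtain ⟨u₂, hu₂, hmin⟩ := hN₂.1.exists_ratio_le hN₁.1
  have := hN₁.nonempty_of_jsr_pos hb.1 hu₁
  obtain ⟨i₁, h₁⟩ := hN₁.exists_seq_of_ratio_le hN₂ hu₁ hmax
  obtain ⟨i₂, h₂⟩ := hN₂.exists_seq_of_ratio_le hN₁ hu₂ hmin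
  obtain ⟨B, hB, v₁, v₂, e₁, e₂, e₃, e₄⟩ := exists_mem_limitSemigroup_norm_apply_eq hb hu hN₁.1
    hN₂.1 hu₁ hu₂ h₁ fun n => (h₂ n).symm
  have hpos₁ := hN₁.1.pos hu₁
  have hB₀ : B ≠ 0 := by
    rintro rfl
    rw [map_zero, zero_apply, hN₁.1.map_zero] at e₁
    exact hpos₁.ne e₁
  have hratio := hN₁.1.mul_apply_eq_mul_apply_of_rank_le_one hN₂.1 (h1.2 B hB hB₀).le v₁ v₂
  rw [e₁, e₂, e₃, e₄] at hratio
  exact ⟨N₂ u₁ / N₁ u₁, div_pos (hN₂.1.pos hu₁) hpos₁,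
    eq_div_mul_of_max_ratio_eq_min_ratio hpos₁ (hN₁.1.pos hu₂) hmax hmin hratio⟩
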